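/- Let A be a DG R-algebra, Q a graded-projective DG A-module, and N a DG A-module. The map Ψ: YExt^1_A(Q, N) → H_{−1}(Hom_A(Q, N)), sending the class of a graded-split extension with differential [[∂^N, λ],[0, ∂^Q]] to the homology class of the cycle λ, is a well-defined isomorphism of abelian groups, where YExt^1 carries the Baer sum. -/

import Mathlib

/-!
Graded projectivity lifts `id_Q` through the projection of an extension `0 → N → E → Q → 0` to
a degree `0` `A`-linear section `s`. Then `∂s - s∂` factors through `N` as a degree `-1` cycle
`λ`, and `(n, q) ↦ n + s q` identifies `E` with `N ⊕_λ Q`. An equivalence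
`N ⊕_λ Q ≅ N ⊕_λ' Q` has the form `(n, q) ↦ (n + v q, q)`, and it commutes with the
differentials exactly when `λ - λ' = ∂v - v∂`; so `Ψ` is well defined and bijective. In the Baer
sum of `N ⊕_λ₁ Q` and `N ⊕_λ₂ Q`, sending `(n, q)` to the class of the point `((n, q), (0, q))`
of the pullback is an isomorphism from `N ⊕_{λ₁+λ₂} Q`: it fails to commute with the
differentials only by the element `-λ₂ q` of the antidiagonal copy of `N`, which dies in the
quotient.
-/

open Function

/-- A chain complex of `R`-modules, indexed homologically over `ℤ`. -/
structure Cx (R : Type) [CommRing R] where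
  X : ℤ → Type
  [acg : ∀ i, AddCommGroup (X i)]
  [mod : ∀ i, Module R (X i)]
  d : ∀ i, X i →ₗ[R] X (i - 1)
  d_sq : ∀ i x, d (i - 1) (d i x) = 0

attribute [instance] Cx.acg Cx.mod

variable {R : Type} [CommRing R]

/-- Transport along an equality of degrees. -/
def Cx.cst (M : Cx R) {i j : ℤ} (h : i = j) : M.X i →ₗ[R] M.X j where
  toFun x := congrArg M.X h ▸ x
  map_add' := by subst h; intro x y; rfl
  map_smul' := by subst h; intro r x; rfl

/-- A positively graded, graded commutative DG `R`-algebra. -/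
structure DGAlg (R : Type) [CommRing R] extends Cx R where
  one : toCx.X 0
  mul : ∀ {i j : ℤ}, toCx.X i → toCx.X j → toCx.X (i + j)
  pos : ∀ i : ℤ, i < 0 → Subsingleton (toCx.X i)
  mul_add : ∀ {i j} (a : toCx.X i) (b c : toCx.X j), mul a (b + c) = mul a b + mul a c
  add_mul : ∀ {i j} (a b : toCx.X i) (c : toCx.X j), mul (a + b) c = mul a c + mul b c
  smul_mul : ∀ {i j} (r : R) (a : toCx.X i) (b : toCx.X j), mul (r • a) b = r • mul a b
  mul_smul : ∀ {i j} (r : R) (a : toCx.X i) (b : toCx.X j), mul a (r • b) = r • mul a b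
  one_mul : ∀ {i} (a : toCx.X i), toCx.cst (zero_add i) (mul one a) = a
  mul_one : ∀ {i} (a : toCx.X i), toCx.cst (add_zero i) (mul a one) = a
  mul_assoc : ∀ {i j k} (a : toCx.X i) (b : toCx.X j) (c : toCx.X k),
    toCx.cst (add_assoc i j k) (mul (mul a b) c) = mul a (mul b c)
  mul_comm : ∀ {i j} (a : toCx.X i) (b : toCx.X j),
    mul a b = ((i * j).negOnePow : ℤ) • toCx.cst (add_comm j i) (mul b a)
  leibniz : ∀ {i j} (a : toCx.X i) (b : toCx.X j),
    toCx.d (i + j) (mul a b) =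
      toCx.cst (by omega) (mul (toCx.d i a) b) +
      (i.negOnePow : ℤ) • toCx.cst (by omega) (mul a (toCx.d j b))

/-- A DG module over a DG `R`-algebra `A`. -/
structure DGMod (R : Type) [CommRing R] (A : DGAlg R) extends Cx R where
  smul : ∀ {i j : ℤ}, A.X i → toCx.X j → toCx.X (i + j)
  smul_add : ∀ {i j} (a : A.X i) (m m' : toCx.X j), smul a (m + m') = smul a m + smul a m'
  add_smul : ∀ {i j} (a a' : A.X i) (m : toCx.X j), smul (a + a') m = smul a m + smul a' m
  smul_rsmul : ∀ {i j} (r : R) (a : A.X i) (m : toCx.X j), smul (r • a) m = r • smul a m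
  rsmul_smul : ∀ {i j} (r : R) (a : A.X i) (m : toCx.X j), smul a (r • m) = r • smul a m
  one_smul : ∀ {j} (m : toCx.X j), toCx.cst (zero_add j) (smul A.one m) = m
  mul_smul : ∀ {i j k} (a : A.X i) (b : A.X j) (m : toCx.X k),
    toCx.cst (add_assoc i j k) (smul (A.mul a b) m) = smul a (smul b m)
  leibniz : ∀ {i j} (a : A.X i) (m : toCx.X j),
    toCx.d (i + j) (smul a m) =
      toCx.cst (by omega) (smul (A.d i a) m) +
      (i.negOnePow : ℤ) • toCx.cst (by omega) (smul a (toCx.d j m))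

namespace DGMod

variable {A : DGAlg R}

lemma smul_zero' (M : DGMod R A) {i j : ℤ} (a : A.X i) :
    M.smul a (0 : M.X j) = 0 := by
  have h := M.smul_add a (0 : M.X j) 0
  rw [add_zero] at h
  exact (left_eq_add.mp h)

/-- scalar multiplication by `a ∈ A_i`, as an `R`-linear map -/
def smulL (M : DGMod R A) {i j : ℤ} (a : A.X i) : M.X j →ₗ[R] M.X (i + j) where
  toFun m := M.smul a m
  map_add' := M.smul_add a
  map_smul' r m := M.rsmul_smul r a m

end DGMod

variable {A : DGAlg R}

/-- A morphism of DG `A`-modules. -/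
structure DGHom (M N : DGMod R A) where
  f : ∀ i, M.X i →ₗ[R] N.X i
  comm_d : ∀ i m, f (i - 1) (M.d i m) = N.d i (f i m)
  comm_smul : ∀ {i j} (a : A.X i) (m : M.X j), f (i + j) (M.smul a m) = N.smul a (f j m)

namespace DGHom

variable {M N P : DGMod R A}

def comp (g : DGHom N P) (h : DGHom M N) : DGHom M P where
  f i := (g.f i).comp (h.f i)
  comm_d i m := by simp [h.comm_d, g.comm_d]
  comm_smul {i j} a m := by simp [h.comm_smul, g.comm_smul]

instance : Zero (DGHom M N) :=
  ⟨{ f := fun _ => 0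
     comm_d := by intro i m; simp
     comm_smul := by intro i j a m; simp [N.smul_zero'] }⟩

instance : Add (DGHom M N) :=
  ⟨fun g h =>
    { f := fun i => g.f i + h.f i
      comm_d := by intro i m; simp [g.comm_d, h.comm_d]
      comm_smul := by intro i j a m; simp [g.comm_smul, h.comm_smul, N.smul_add] }⟩

instance : Neg (DGHom M N) :=
  ⟨fun g =>
    { f := fun i => -g.f i
      comm_d := by intro i m; simp [g.comm_d]
      comm_smul := by
        intro i j a m
        have h0 := N.smul_add a (g.f j m) (-g.f j m)
        rw [add_neg_cancel, N.smul_zero'] at h0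
        simp only [LinearMap.neg_apply, g.comm_smul]
        exact neg_eq_of_add_eq_zero_right h0.symm }⟩

instance : Sub (DGHom M N) := ⟨fun g h => g + -h⟩

end DGHom

/-- A graded `A`-linear map of degree `0` (not necessarily a chain map). -/
structure GH0 (M N : DGMod R A) where
  f : ∀ i, M.X i →ₗ[R] N.X i
  comm_smul : ∀ {i j} (a : A.X i) (m : M.X j), f (i + j) (M.smul a m) = N.smul a (f j m)

/-- A graded `A`-linear map of degree `-1` (with the Koszul sign rule). -/
structure GHneg (M N : DGMod R A) where
  f : ∀ i, M.X i →ₗ[R] N.X (i - 1)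
  comm_smul : ∀ {i j} (a : A.X i) (m : M.X j),
    f (i + j) (M.smul a m) = (i.negOnePow : ℤ) • N.cst (by omega) (N.smul a (f j m))

/-- A graded `A`-linear map of degree `n` (with the Koszul sign rule):
the degree `n` component of the Hom complex `Hom_A(M,N)`. -/
structure GHn (M N : DGMod R A) (n : ℤ) where
  f : ∀ i, M.X i →ₗ[R] N.X (i + n)
  comm_smul : ∀ {i j} (a : A.X i) (m : M.X j),
    f (i + j) (M.smul a m) = ((i * n).negOnePow : ℤ) • N.cst (by omega) (N.smul a (f j m))

namespace GHneg

variable {M N : DGMod R A}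

instance : Zero (GHneg M N) :=
  ⟨{ f := fun _ => 0
     comm_smul := by intro i j a m; simp [N.smul_zero'] }⟩

instance : Add (GHneg M N) :=
  ⟨fun g h =>
    { f := fun i => g.f i + h.f i
      comm_smul := by
        intro i j a m
        simp only [LinearMap.add_apply, g.comm_smul, h.comm_smul, ← smul_add, ← map_add,
          N.smul_add] }⟩

instance : Neg (GHneg M N) :=
  ⟨fun g =>
    { f := fun i => -g.f i
      comm_smul := by
        intro i j a m
        have h0 := N.smul_add a (g.f j m) (-(g.f j m))
        rw [add_neg_cancel, N.smul_zero'] at h0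
        have h1 : N.smul a (-(g.f j m)) = -N.smul a (g.f j m) :=
          (neg_eq_of_add_eq_zero_right h0.symm).symm
        simp only [LinearMap.neg_apply, g.comm_smul, h1, map_neg, smul_neg] }⟩

instance : Sub (GHneg M N) := ⟨fun g h => g + -h⟩

/-- `λ` is a cycle of degree `-1` in `Hom_A(M,N)`: `∂^N ∘ λ + λ ∘ ∂^M = 0`. -/
def isCycle (l : GHneg M N) : Prop :=
  ∀ i m, N.d (i - 1) (l.f i m) + l.f (i - 1) (M.d i m) = 0

/-- `λ` is a boundary of degree `-1` in `Hom_A(M,N)`: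
`λ = ∂^N ∘ v − v ∘ ∂^M` for a degree `0` graded `A`-linear map `v`. -/
def isBdry (l : GHneg M N) : Prop :=
  ∃ v : GH0 M N, ∀ i m, l.f i m = N.d i (v.f i m) - v.f (i - 1) (M.d i m)

end GHneg

namespace GHn

variable {M N : DGMod R A} {n : ℤ}

instance : Zero (GHn M N n) :=
  ⟨{ f := fun _ => 0
     comm_smul := by intro i j a m; simp [N.smul_zero'] }⟩

instance : Add (GHn M N n) :=
  ⟨fun g h =>
    { f := fun i => g.f i + h.f i
      comm_smul := by
        intro i j a m
        simp only [LinearMap.add_apply, g.comm_smul, h.comm_smul, ← smul_add, ← map_add,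
          N.smul_add] }⟩

instance : Neg (GHn M N n) :=
  ⟨fun g =>
    { f := fun i => -g.f i
      comm_smul := by
        intro i j a m
        have h0 := N.smul_add a (g.f j m) (-(g.f j m))
        rw [add_neg_cancel, N.smul_zero'] at h0
        have h1 : N.smul a (-(g.f j m)) = -N.smul a (g.f j m) :=
          (neg_eq_of_add_eq_zero_right h0.symm).symm
        simp only [LinearMap.neg_apply, g.comm_smul, h1, map_neg, smul_neg] }⟩

instance : Sub (GHn M N n) := ⟨fun g h => g + -h⟩

/-- the cycle condition in degree `n` of the Hom complex: `∂^N ∘ f = (−1)^n f ∘ ∂^M` -/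
def isCycle (l : GHn M N n) : Prop :=
  ∀ i m, N.d (i + n) (l.f i m) = (n.negOnePow : ℤ) • N.cst (by omega) (l.f (i - 1) (M.d i m))

/-- the boundary condition in degree `n` of the Hom complex -/
def isBdry (l : GHn M N n) : Prop :=
  ∃ v : GHn M N (n + 1), ∀ i m,
    l.f i m = N.cst (by omega) (N.d (i + (n + 1)) (v.f i m)) -
      ((n + 1).negOnePow : ℤ) • N.cst (by omega) (v.f (i - 1) (M.d i m))

end GHn

lemma DGHom.f_cst {M N : DGMod R A} (p : DGHom M N) {u v : ℤ} (h : u = v) (x : M.X u) :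
    p.f v (M.cst h x) = N.cst h (p.f u x) := by subst h; rfl

namespace GHn

/-- postcomposition with a morphism, on degree `n` graded maps -/
def map {Q M N : DGMod R A} (p : DGHom M N) (l : GHn Q M n) : GHn Q N n where
  f i := (p.f (i + n)).comp (l.f i)
  comm_smul := by
    intro i j a m
    show p.f (i + j + n) (l.f (i + j) _) = _
    rw [l.comm_smul a m, map_zsmul, DGHom.f_cst, p.comm_smul]
    rfl

end GHn

/-- A short exact sequence (extension) of DG `A`-modules `0 → N → E → Q → 0`. -/
structure DGExt (Q N : DGMod R A) where
  E : DGMod R A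
  ι : DGHom N E
  p : DGHom E Q
  inj : ∀ i, Injective (ι.f i)
  surj : ∀ i, Surjective (p.f i)
  exact : ∀ i, LinearMap.range (ι.f i) = LinearMap.ker (p.f i)

namespace DGExt

variable {Q N : DGMod R A}

/-- an extension splits if the inclusion admits a retraction which is a morphism
of DG `A`-modules -/
def Splits (e : DGExt Q N) : Prop :=
  ∃ h : DGHom e.E N, ∀ i x, h.f i (e.ι.f i x) = x

/-- an extension is graded-split if there are degree `0` graded `A`-linear maps
`h, k` with `h∘ι = id`, `p∘k = id`, `h∘k = 0` and `ι∘h + k∘p = id` -/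
def GradedSplit (e : DGExt Q N) : Prop :=
  ∃ (h : GH0 e.E N) (k : GH0 Q e.E),
    (∀ i x, h.f i (e.ι.f i x) = x) ∧
    (∀ i q, e.p.f i (k.f i q) = q) ∧
    (∀ i q, h.f i (k.f i q) = 0) ∧
    (∀ i x, e.ι.f i (h.f i x) + k.f i (e.p.f i x) = x)

/-- Yoneda equivalence of extensions: an isomorphism of DG `A`-modules compatible with
the identity maps on `N` and `Q` -/
def Equiv' (e e' : DGExt Q N) : Prop :=
  ∃ φ : DGHom e.E e'.E, (∀ i, Bijective (φ.f i)) ∧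
    (∀ i x, φ.f i (e.ι.f i x) = e'.ι.f i x) ∧
    (∀ i x, e'.p.f i (φ.f i x) = e.p.f i x)

end DGExt

/-- `Q` is graded-projective: `Hom_A(Q,−)` preserves surjectivity of morphisms. -/
def GradedProjective (Q : DGMod R A) : Prop :=
  ∀ (M N : DGMod R A) (p : DGHom M N), (∀ i, Surjective (p.f i)) →
    ∀ (n : ℤ) (g : GHn Q N n), ∃ h : GHn Q M n, ∀ i m, p.f (i + n) (h.f i m) = g.f i m

/-- `P` is categorically projective: a projective object of the abelian category of
DG `A`-modules. -/
def CatProjective (P : DGMod R A) : Prop :=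
  ∀ (M N : DGMod R A) (p : DGHom M N), (∀ i, Surjective (p.f i)) →
    ∀ g : DGHom P N, ∃ h : DGHom P M, ∀ i x, p.f i (h.f i x) = g.f i x

/-- `M` is acyclic (homologically trivial). -/
def AcyclicD (M : DGMod R A) : Prop :=
  ∀ i x, M.d i x = 0 → ∃ y, x = M.cst (by omega) (M.d (i + 1) y)

/-- Elementwise formulation of "`p` induces isomorphisms on all homology groups". -/
def QuasiIsoD {M N : DGMod R A} (p : DGHom M N) : Prop :=
  ∀ i, (∀ z, N.d i z = 0 → ∃ x, M.d i x = 0 ∧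
        ∃ w, z - p.f i x = N.cst (by omega) (N.d (i + 1) w)) ∧
    (∀ x, M.d i x = 0 → (∃ w, p.f i x = N.cst (by omega) (N.d (i + 1) w)) →
        ∃ v, x = M.cst (by omega) (M.d (i + 1) v))

/-- `Q` is semi-projective: it is graded-projective and `Hom_A(Q,−)` sends surjective
quasiisomorphisms to surjective quasiisomorphisms. -/
def SemiProjective (Q : DGMod R A) : Prop :=
  GradedProjective Q ∧
  ∀ (M N : DGMod R A) (p : DGHom M N), (∀ i, Surjective (p.f i)) → QuasiIsoD p →
    ((∀ (n : ℤ) (g : GHn Q N n), ∃ h : GHn Q M n, ∀ i m, (GHn.map p h).f i m = g.f i m) ∧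
     (∀ n : ℤ,
        (∀ g : GHn Q N n, g.isCycle →
          ∃ h : GHn Q M n, h.isCycle ∧ (g - GHn.map p h).isBdry) ∧
        (∀ h : GHn Q M n, h.isCycle → (GHn.map p h).isBdry → h.isBdry)))

/-- the underlying complex of `N ⊕_λ Q` -/
def twistCx (N Q : DGMod R A) (l : GHneg Q N) (hc : l.isCycle) : Cx R where
  X i := N.X i × Q.X i
  acg i := inferInstance
  mod i := inferInstance
  d i := LinearMap.prod
    ((N.d i).comp (LinearMap.fst _ _ _) + (l.f i).comp (LinearMap.snd _ _ _))
    ((Q.d i).comp (LinearMap.snd _ _ _))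
  d_sq := by
    intro i x
    have h := hc i x.2
    simp only [LinearMap.prod_apply, LinearMap.add_apply, LinearMap.coe_comp, comp_apply,
      LinearMap.fst_apply, LinearMap.snd_apply, Pi.prod]
    rw [Prod.ext_iff]
    constructor
    · show (N.d (i-1)) ((N.d i) x.1 + (l.f i) x.2) + (l.f (i - 1)) ((Q.d i) x.2) = 0
      rw [map_add, N.d_sq, zero_add, h]
    · exact Q.d_sq i x.2

lemma twistCx_cst (N Q : DGMod R A) (l : GHneg Q N) (hc : l.isCycle) {u v : ℤ} (h : u = v)
    (x : N.X u × Q.X u) :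
    (twistCx N Q l hc).cst h x = (N.cst h x.1, Q.cst h x.2) := by subst h; rfl

/-- The DG module `N ⊕_λ Q`: underlying graded module `N ⊕ Q`, with differential
`[[∂^N, λ],[0, ∂^Q]]`, attached to a degree `-1` cycle `λ ∈ Hom_A(Q,N)_{-1}`. -/
def stdMod (N Q : DGMod R A) (l : GHneg Q N) (hc : l.isCycle) : DGMod R A where
  toCx := twistCx N Q l hc
  smul {i j} a m := (N.smul a m.1, Q.smul a m.2)
  smul_add := by
    intro i j a m m'
    refine Prod.ext ?_ ?_
    · show N.smul a (m.1 + m'.1) = N.smul a m.1 + N.smul a m'.1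
      exact N.smul_add a m.1 m'.1
    · show Q.smul a (m.2 + m'.2) = Q.smul a m.2 + Q.smul a m'.2
      exact Q.smul_add a m.2 m'.2
  add_smul := by
    intro i j a a' m
    refine Prod.ext ?_ ?_
    · exact N.add_smul a a' m.1
    · exact Q.add_smul a a' m.2
  smul_rsmul := by
    intro i j r a m
    refine Prod.ext ?_ ?_
    · exact N.smul_rsmul r a m.1
    · exact Q.smul_rsmul r a m.2
  rsmul_smul := by
    intro i j r a m
    refine Prod.ext ?_ ?_
    · show N.smul a (r • m.1) = r • N.smul a m.1
      exact N.rsmul_smul r a m.1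
    · show Q.smul a (r • m.2) = r • Q.smul a m.2
      exact Q.rsmul_smul r a m.2
  one_smul := by
    intro j m
    rw [twistCx_cst]
    exact Prod.ext (N.one_smul m.1) (Q.one_smul m.2)
  mul_smul := by
    intro i j k a b m
    rw [twistCx_cst]
    exact Prod.ext (N.mul_smul a b m.1) (Q.mul_smul a b m.2)
  leibniz := by
    intro i j a m
    rw [twistCx_cst, twistCx_cst]
    simp only [LinearMap.prod_apply, LinearMap.add_apply, LinearMap.coe_comp, comp_apply,
      LinearMap.fst_apply, LinearMap.snd_apply, Pi.prod, Prod.smul_def, Prod.mk_add_mk]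
    refine Prod.ext ?_ ?_
    · show N.d (i + j) (N.smul a m.1) + l.f (i + j) (Q.smul a m.2) =
        N.cst _ (N.smul (A.d i a) m.1) +
          (i.negOnePow : ℤ) • N.cst _ (N.smul a (N.d j m.1 + l.f j m.2))
      rw [N.leibniz, l.comm_smul, N.smul_add, map_add, smul_add]
      abel
    · show Q.d (i + j) (Q.smul a m.2) =
        Q.cst _ (Q.smul (A.d i a) m.2) + (i.negOnePow : ℤ) • Q.cst _ (Q.smul a (Q.d j m.2))
      rw [Q.leibniz]

/-- The graded-split extension `0 → N → N ⊕_λ Q → Q → 0` attached to a cycle `λ`. -/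
def stdExt (N Q : DGMod R A) (l : GHneg Q N) (hc : l.isCycle) : DGExt Q N where
  E := stdMod N Q l hc
  ι := { f := fun i => LinearMap.inl _ _ _
         comm_d := by
           intro i m
           refine Prod.ext ?_ ?_
           · show N.d i m = N.d i m + l.f i 0
             rw [map_zero, add_zero]
           · show (0 : Q.X (i - 1)) = Q.d i 0
             rw [map_zero]
         comm_smul := by
           intro i j a m
           refine Prod.ext ?_ ?_
           · rfl
           · exact (Q.smul_zero' a).symm }
  p := { f := fun i => LinearMap.snd _ _ _
         comm_d := by intro i m; rfl
         comm_smul := by intro i j a m; rfl }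
  inj := fun i => LinearMap.inl_injective
  surj := fun i => LinearMap.snd_surjective
  exact := fun i => LinearMap.range_inl _ _ _

/-- `t` is a Baer sum of `e` and `e'`: it is obtained from the pullback `e.E ×_Q e'.E`
by dividing out the antidiagonal copy of `N` (image of `x ↦ (−x, x)`). -/
def IsBaerSum {Q N : DGMod R A} (e e' t : DGExt Q N) : Prop :=
  ∃ (P : DGMod R A) (p1 : DGHom P e.E) (p2 : DGHom P e'.E) (γ : DGHom N P)
      (τ : DGHom P t.E),
    -- `P` is the pullback of `e.p` and `e'.p`:
    (∀ i x, e.p.f i (p1.f i x) = e'.p.f i (p2.f i x)) ∧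
    (∀ i, Injective fun x : P.X i => (p1.f i x, p2.f i x)) ∧
    (∀ (i : ℤ) (u : e.E.X i) (v : e'.E.X i), e.p.f i u = e'.p.f i v →
      ∃ x : P.X i, p1.f i x = u ∧ p2.f i x = v) ∧
    -- `γ` is the antidiagonal embedding of `N` into the pullback:
    (∀ i x, p1.f i (γ.f i x) = -(e.ι.f i x)) ∧
    (∀ i x, p2.f i (γ.f i x) = e'.ι.f i x) ∧
    -- `τ` realizes `t.E` as the quotient of the pullback by the antidiagonal `N`:
    (∀ i, Surjective (τ.f i)) ∧
    (∀ i, LinearMap.range (γ.f i) = LinearMap.ker (τ.f i)) ∧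
    -- compatibility with the structure maps of `t`:
    (∀ (i : ℤ) (n : N.X i) (x : P.X i),
      p1.f i x = e.ι.f i n → p2.f i x = 0 → τ.f i x = t.ι.f i n) ∧
    (∀ i x, t.p.f i (τ.f i x) = e.p.f i (p1.f i x))

lemma GHneg.isCycle_add {R : Type} [CommRing R] {A : DGAlg R} {N Q : DGMod R A}
    {l l' : GHneg Q N} (hc : l.isCycle) (hc' : l'.isCycle) : (l + l').isCycle := by
  intro i m
  have h1 := hc i m
  have h2 := hc' i m
  show N.d (i - 1) (l.f i m + l'.f i m) +
    ((l.f (i - 1)) ((Q.d i) m) + (l'.f (i - 1)) ((Q.d i) m)) = 0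
  rw [map_add]
  have h3 : ((N.d (i - 1)) ((l.f i) m) + (l.f (i - 1)) ((Q.d i) m)) +
      ((N.d (i - 1)) ((l'.f i) m) + (l'.f (i - 1)) ((Q.d i) m)) = 0 := by
    rw [h1, h2, add_zero]
  rw [← h3]
  abel

section Statement6

variable {R : Type} [CommRing R] {A : DGAlg R} (N Q : DGMod R A)

/-- degree `-1` cycles in `Hom_A(Q,N)` -/
def Cyc := {l : GHneg Q N // l.isCycle}

instance : Add (Cyc N Q) :=
  ⟨fun x y => ⟨x.1 + y.1, GHneg.isCycle_add x.2 y.2⟩⟩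

/-- `H_{−1}(Hom_A(Q,N))`: cycles modulo boundaries -/
def Hneg1 := Quot (fun x y : Cyc N Q => (x.1 - y.1).isBdry)

/-- `YExt^1_A(Q,N)`: extensions modulo Yoneda equivalence -/
def YExt1 := Quot (fun e e' : DGExt Q N => e.Equiv' e')

namespace Quot

variable {α β : Type*} {r : α → α → Prop} {s : β → β → Prop}

lemma mk_eq_mk_iff (hr : Equivalence r) {a b : α} : Quot.mk r a = Quot.mk r b ↔ r a b :=
  ⟨fun h => (Equivalence.eqvGen_iff hr).mp (Quot.eqvGen_exact h), Quot.sound⟩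

def equivOfSection (hr : Equivalence r) (f : α → β) (g : β → α) (hgf : ∀ a, r (g (f a)) a)
    (hg : ∀ b b', r (g b) (g b') ↔ s b b') : Quot r ≃ Quot s where
  toFun := Quot.lift (fun a => Quot.mk s (f a)) fun a a' h =>
    Quot.sound ((hg _ _).mp (hr.trans (hgf a) (hr.trans h (hr.symm (hgf a')))))
  invFun := Quot.lift (fun b => Quot.mk r (g b)) fun b b' h => Quot.sound ((hg b b').mpr h)
  left_inv := Quot.ind fun a => Quot.sound (hgf a)
  right_inv := Quot.ind fun b => Quot.sound ((hg _ _).mp (hgf (g b)))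

lemma equivOfSection_mk_section (hr : Equivalence r) (f : α → β) (g : β → α)
    (hgf : ∀ a, r (g (f a)) a) (hg : ∀ b b', r (g b) (g b') ↔ s b b') (b : β) :
    equivOfSection hr f g hgf hg (Quot.mk r (g b)) = Quot.mk s b :=
  Quot.sound ((hg _ _).mp (hgf (g b)))

end Quot

section LiftOfInjective

variable {M₁ M₂ M₃ : Type*} [AddCommGroup M₁] [AddCommGroup M₂] [AddCommGroup M₃]
  [Module R M₁] [Module R M₂] [Module R M₃]

noncomputable def LinearMap.liftOfInjective (f : M₁ →ₗ[R] M₂) (hf : Injective f)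
    (g : M₃ →ₗ[R] M₂) (h : ∀ x, g x ∈ LinearMap.range f) : M₃ →ₗ[R] M₁ :=
  (LinearEquiv.ofInjective f hf).symm.toLinearMap ∘ₗ g.codRestrict _ h

@[simp]
lemma LinearMap.apply_liftOfInjective (f : M₁ →ₗ[R] M₂) (hf : Injective f)
    (g : M₃ →ₗ[R] M₂) (h : ∀ x, g x ∈ LinearMap.range f) (x : M₃) :
    f (f.liftOfInjective hf g h x) = g x :=
  LinearEquiv.ofInjective_symm_apply (f := f) (h := hf) (g.codRestrict _ h x)

end LiftOfInjective

lemma Cx.cst_cst (M : Cx R) {i j k : ℤ} (h : i = j) (h' : j = k) (x : M.X i) :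
    M.cst h' (M.cst h x) = M.cst (h.trans h') x := by
  subst h h'; rfl

lemma DGMod.cst_smul (M : DGMod R A) {i j j' : ℤ} (h : j = j') (h' : i + j = i + j')
    (a : A.X i) (m : M.X j) : M.cst h' (M.smul a m) = M.smul a (M.cst h m) := by
  subst h; rfl

lemma DGMod.smul_sub (M : DGMod R A) {i j : ℤ} (a : A.X i) (m m' : M.X j) :
    M.smul a (m - m') = M.smul a m - M.smul a m' :=
  map_sub (M.smulL a) m m'

namespace GHneg

variable {M N : DGMod R A}

@[simp] lemma sub_f (l l' : GHneg M N) (i : ℤ) (m : M.X i) :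
    (l - l').f i m = l.f i m - l'.f i m := (sub_eq_add_neg _ _).symm

end GHneg

def DGHom.id (M : DGMod R A) : DGHom M M :=
  ⟨fun _ => LinearMap.id, fun _ _ => rfl, fun _ _ => rfl⟩

namespace GH0

variable {M N : DGMod R A}

def id (M : DGMod R A) : GH0 M M := ⟨fun _ => LinearMap.id, fun _ _ => rfl⟩

lemma f_cst (v : GH0 M N) {i j : ℤ} (h : i = j) (x : M.X i) :
    v.f j (M.cst h x) = N.cst h (v.f i x) := by
  subst h; rfl

def toGHn (v : GH0 M N) : GHn M N 0 where
  f i := N.cst (add_zero i).symm ∘ₗ v.f i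
  comm_smul {i j} a m := by
    simp only [LinearMap.comp_apply, v.comm_smul, mul_zero, Int.negOnePow_zero, Units.val_one,
      one_smul]
    rw [← N.cst_smul _ (by omega), Cx.cst_cst]

end GH0

def GHn.toGH0 {M N : DGMod R A} (v : GHn M N 0) : GH0 M N where
  f i := N.cst (add_zero i) ∘ₗ v.f i
  comm_smul {i j} a m := by
    simp only [LinearMap.comp_apply, v.comm_smul, mul_zero, Int.negOnePow_zero, Units.val_one,
      one_smul, Cx.cst_cst]
    rw [← N.cst_smul (add_zero j) (by omega)]

namespace DGExt

variable {Q N : DGMod R A}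

lemma p_ι (e : DGExt Q N) (i : ℤ) (n : N.X i) : e.p.f i (e.ι.f i n) = 0 := by
  rw [← LinearMap.mem_ker, ← e.exact i]
  exact ⟨n, rfl⟩

lemma exists_ι_eq (e : DGExt Q N) {i : ℤ} {x : e.E.X i} (hx : e.p.f i x = 0) :
    ∃ n, e.ι.f i n = x := by
  rwa [← LinearMap.mem_ker, ← e.exact i] at hx

lemma Equiv'.refl (e : DGExt Q N) : e.Equiv' e :=
  ⟨DGHom.id e.E, fun _ => bijective_id, fun _ _ => rfl, fun _ _ => rfl⟩

lemma Equiv'.symm {e e' : DGExt Q N} (h : e.Equiv' e') : e'.Equiv' e := by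
  obtain ⟨φ, hbij, hι, hp⟩ := h
  let ψ i : e'.E.X i →ₗ[R] e.E.X i := (LinearEquiv.ofBijective (φ.f i) (hbij i)).symm
  have hφψ : ∀ i y, φ.f i (ψ i y) = y := fun i => (LinearEquiv.ofBijective _ _).apply_symm_apply
  refine ⟨⟨ψ, fun i m => ?_, fun a m => ?_⟩,
    fun i => (LinearEquiv.ofBijective (φ.f i) (hbij i)).symm.bijective,
    fun i x => (hbij i).1 ?_, fun i x => ?_⟩
  · exact (hbij _).1 (by rw [hφψ, φ.comm_d, hφψ])
  · exact (hbij _).1 (by rw [hφψ, φ.comm_smul, hφψ])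
  · rw [hφψ, hι]
  · rw [← hp, hφψ]

lemma Equiv'.trans {e₁ e₂ e₃ : DGExt Q N} (h : e₁.Equiv' e₂) (h' : e₂.Equiv' e₃) :
    e₁.Equiv' e₃ := by
  obtain ⟨φ, hb, hι, hp⟩ := h
  obtain ⟨φ', hb', hι', hp'⟩ := h'
  refine ⟨φ'.comp φ, fun i => (hb' i).comp (hb i), fun i x => ?_, fun i x => ?_⟩
  · exact (congrArg (φ'.f i) (hι i x)).trans (hι' i x)
  · exact (hp' i _).trans (hp i x)

lemma equivalence_equiv' : Equivalence (@Equiv' R _ A Q N) :=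
  ⟨Equiv'.refl, Equiv'.symm, Equiv'.trans⟩

end DGExt

section

variable {N Q : DGMod R A}

section StdExt

variable {l l' : GHneg Q N} {hc : l.isCycle} {hc' : l'.isCycle}

lemma isBdry_sub_of_equiv' (h : (stdExt N Q l hc).Equiv' (stdExt N Q l' hc')) :
    (l - l').isBdry := by
  obtain ⟨φ, -, hι, hp⟩ := h
  let v : GH0 Q N :=
    ⟨fun i => LinearMap.fst R _ _ ∘ₗ φ.f i ∘ₗ LinearMap.inr R _ _, fun a q => by
      have h := congrArg Prod.fst (φ.comm_smul a ((0 : N.X _), q))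
      rwa [show ((stdExt N Q l hc).E.smul a ((0 : N.X _), q)) = ((0 : N.X _), Q.smul a q) from
        Prod.ext (N.smul_zero' a) rfl] at h⟩
  have hφ : ∀ i (x : (stdExt N Q l hc).E.X i), φ.f i x = (x.1 + v.f i x.2, x.2) := by
    intro i x
    refine Prod.ext ?_ (hp i x)
    have hx : φ.f i x = φ.f i ((stdExt N Q l hc).ι.f i x.1) + φ.f i ((0 : N.X i), x.2) := by
      erw [← map_add]
      exact congrArg (φ.f i) (Prod.ext (add_zero x.1).symm (zero_add x.2).symm)
    rw [hx, hι]
    rfl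
  refine ⟨v, fun i q => ?_⟩
  have hd := congrArg Prod.fst (φ.comm_d i ((0 : N.X i), q))
  change (φ.f (i - 1) (N.d i 0 + l.f i q, Q.d i q)).1 =
    N.d i (φ.f i (0, q)).1 + l'.f i (φ.f i (0, q)).2 at hd
  erw [hφ, hφ] at hd
  simp only [map_zero, zero_add] at hd
  rw [GHneg.sub_f, sub_eq_sub_iff_add_eq_add]
  exact hd

lemma equiv'_of_isBdry_sub (h : (l - l').isBdry) :
    (stdExt N Q l hc).Equiv' (stdExt N Q l' hc') := by
  obtain ⟨v, hv⟩ := h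
  let φ i : N.X i × Q.X i →ₗ[R] N.X i × Q.X i :=
    (LinearMap.fst R _ _ + v.f i ∘ₗ LinearMap.snd R _ _).prod (LinearMap.snd R _ _)
  refine ⟨⟨φ, fun i x => Prod.ext ?_ rfl, fun a x => Prod.ext ?_ rfl⟩,
    fun i => ⟨fun x y hxy => ?_, fun y => ⟨(y.1 - v.f i y.2, y.2), ?_⟩⟩,
    fun i n => Prod.ext ?_ rfl, fun i x => rfl⟩
  · show N.d i x.1 + l.f i x.2 + v.f (i - 1) (Q.d i x.2) = N.d i (x.1 + v.f i x.2) + l'.f i x.2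
    have hvx := hv i x.2
    rw [GHneg.sub_f, sub_eq_sub_iff_add_eq_add] at hvx
    rw [map_add, add_assoc, hvx, add_assoc]
  · show N.smul a x.1 + v.f _ (Q.smul a x.2) = N.smul a (x.1 + v.f _ x.2)
    rw [v.comm_smul, N.smul_add]
  · change φ i x = φ i y at hxy
    obtain ⟨h1, h2⟩ := Prod.ext_iff.mp hxy
    change x.1 + v.f i x.2 = y.1 + v.f i y.2 at h1
    change x.2 = y.2 at h2
    rw [h2] at h1
    exact Prod.ext (add_right_cancel h1) h2
  · exact Prod.ext (sub_add_cancel y.1 (v.f i y.2)) rfl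
  · show n + v.f i 0 = n
    rw [map_zero, add_zero]

lemma stdExt_equiv'_iff : (stdExt N Q l hc).Equiv' (stdExt N Q l' hc') ↔ (l - l').isBdry :=
  ⟨isBdry_sub_of_equiv', equiv'_of_isBdry_sub⟩

end StdExt

lemma GradedProjective.exists_section (hQ : GradedProjective Q) (e : DGExt Q N) :
    ∃ s : GH0 Q e.E, ∀ i q, e.p.f i (s.f i q) = q := by
  obtain ⟨k, hk⟩ := hQ e.E Q e.p e.surj 0 (GH0.id Q).toGHn
  refine ⟨k.toGH0, fun i q => ?_⟩
  change e.p.f i (e.E.cst (add_zero i) (k.f i q)) = q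
  rw [DGHom.f_cst, hk]
  exact Q.cst_cst (add_zero i).symm (add_zero i) q

namespace DGExt

variable (e : DGExt Q N) {s : GH0 Q e.E}

lemma d_sub_mem_range (hs : ∀ i q, e.p.f i (s.f i q) = q) (i : ℤ) (q : Q.X i) :
    e.E.d i (s.f i q) - s.f (i - 1) (Q.d i q) ∈ LinearMap.range (e.ι.f (i - 1)) := by
  rw [e.exact, LinearMap.mem_ker, map_sub, e.p.comm_d, hs, hs, sub_self]

variable (hs : ∀ i q, e.p.f i (s.f i q) = q)

noncomputable def connectingMap (i : ℤ) : Q.X i →ₗ[R] N.X (i - 1) :=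
  (e.ι.f (i - 1)).liftOfInjective (e.inj _) (e.E.d i ∘ₗ s.f i - s.f (i - 1) ∘ₗ Q.d i)
    (e.d_sub_mem_range hs i)

lemma ι_connectingMap (i : ℤ) (q : Q.X i) :
    e.ι.f (i - 1) (e.connectingMap hs i q) = e.E.d i (s.f i q) - s.f (i - 1) (Q.d i q) :=
  LinearMap.apply_liftOfInjective _ _ _ _ q

noncomputable def connecting : GHneg Q N where
  f := e.connectingMap hs
  comm_smul {i j} a q := e.inj _ <| by
    rw [map_zsmul, DGHom.f_cst, e.ι.comm_smul, ι_connectingMap, ι_connectingMap, s.comm_smul,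
      e.E.leibniz, Q.leibniz, map_add, map_zsmul, GH0.f_cst, GH0.f_cst, s.comm_smul, s.comm_smul,
      DGMod.smul_sub, map_sub, smul_sub]
    abel

lemma ι_connecting (i : ℤ) (q : Q.X i) :
    e.ι.f (i - 1) ((e.connecting hs).f i q) = e.E.d i (s.f i q) - s.f (i - 1) (Q.d i q) :=
  e.ι_connectingMap hs i q

lemma connecting_isCycle : (e.connecting hs).isCycle := fun i q => e.inj _ <| by
  rw [map_add, map_zero, e.ι.comm_d, ι_connecting, ι_connecting, map_sub, e.E.d_sq, Q.d_sq,
    map_zero]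
  abel

lemma stdExt_connecting_equiv' :
    (stdExt N Q (e.connecting hs) (e.connecting_isCycle hs)).Equiv' e := by
  let φ i : N.X i × Q.X i →ₗ[R] e.E.X i := (e.ι.f i).coprod (s.f i)
  refine ⟨⟨φ, fun i x => ?_, fun a x => ?_⟩, fun i => ⟨fun x y hxy => ?_, fun x => ?_⟩,
    fun i n => ?_, fun i x => ?_⟩
  · show e.ι.f (i - 1) (N.d i x.1 + (e.connecting hs).f i x.2) + s.f (i - 1) (Q.d i x.2) =
      e.E.d i (e.ι.f i x.1 + s.f i x.2)
    rw [map_add, ι_connecting, e.ι.comm_d, map_add]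
    abel
  · show e.ι.f _ (N.smul a x.1) + s.f _ (Q.smul a x.2) = e.E.smul a (e.ι.f _ x.1 + s.f _ x.2)
    rw [e.ι.comm_smul, s.comm_smul, e.E.smul_add]
  · change e.ι.f i x.1 + s.f i x.2 = e.ι.f i y.1 + s.f i y.2 at hxy
    have h2 : x.2 = y.2 := by
      simpa only [map_add, p_ι, zero_add, hs] using congrArg (e.p.f i) hxy
    rw [h2, add_left_inj] at hxy
    exact Prod.ext (e.inj i hxy) h2
  · obtain ⟨n, hn⟩ := e.exists_ι_eq (x := x - s.f i (e.p.f i x)) (by rw [map_sub, hs, sub_self])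
    exact ⟨(n, e.p.f i x), show e.ι.f i n + s.f i (e.p.f i x) = x by rw [hn, sub_add_cancel]⟩
  · show e.ι.f i n + s.f i 0 = e.ι.f i n
    rw [map_zero, add_zero]
  · show e.p.f i (e.ι.f i x.1 + s.f i x.2) = x.2
    rw [map_add, p_ι, hs, zero_add]

end DGExt

lemma IsBaerSum.of_equiv' {e₁ e₂ e₁' e₂' t : DGExt Q N} (h : IsBaerSum e₁ e₂ t)
    (h₁ : e₁.Equiv' e₁') (h₂ : e₂.Equiv' e₂') : IsBaerSum e₁' e₂' t := by
  obtain ⟨P, p₁, p₂, γ, τ, hp, hinj, hpull, hγ₁, hγ₂, hτ, hker, hτι, hτp⟩ := h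
  obtain ⟨φ₁, hb₁, hι₁, hp₁⟩ := h₁
  obtain ⟨φ₂, hb₂, hι₂, hp₂⟩ := h₂
  refine ⟨P, φ₁.comp p₁, φ₂.comp p₂, γ, τ, fun i x => ?_, fun i x y hxy => ?_,
    fun i u v huv => ?_, fun i x => ?_, fun i x => ?_, hτ, hker, fun i n x h₁ h₂ => ?_,
    fun i x => ?_⟩
  · exact (hp₁ i _).trans ((hp i x).trans (hp₂ i _).symm)
  · obtain ⟨hx₁, hx₂⟩ := Prod.ext_iff.mp hxy
    exact hinj i (Prod.ext ((hb₁ i).1 hx₁) ((hb₂ i).1 hx₂))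
  · obtain ⟨u, rfl⟩ := (hb₁ i).2 u
    obtain ⟨v, rfl⟩ := (hb₂ i).2 v
    obtain ⟨x, rfl, rfl⟩ := hpull i u v (by rwa [hp₁, hp₂] at huv)
    exact ⟨x, rfl, rfl⟩
  · exact (congrArg (φ₁.f i) (hγ₁ i x)).trans (by rw [map_neg, hι₁])
  · exact (congrArg (φ₂.f i) (hγ₂ i x)).trans (hι₂ i x)
  · refine hτι i n x ((hb₁ i).1 (h₁.trans (hι₁ i n).symm)) ((hb₂ i).1 ?_)
    exact h₂.trans (map_zero _).symm
  · exact (hτp i x).trans (hp₁ i _).symm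

structure BaerSumData (e e' t : DGExt Q N) where
  P : DGMod R A
  fst : DGHom P e.E
  snd : DGHom P e'.E
  γ : DGHom N P
  τ : DGHom P t.E
  p_fst : ∀ i x, e.p.f i (fst.f i x) = e'.p.f i (snd.f i x)
  fst_snd_injective : ∀ i, Injective fun x : P.X i => (fst.f i x, snd.f i x)
  exists_fst_snd : ∀ (i : ℤ) (u : e.E.X i) (v : e'.E.X i), e.p.f i u = e'.p.f i v →
    ∃ x : P.X i, fst.f i x = u ∧ snd.f i x = v
  fst_γ : ∀ i x, fst.f i (γ.f i x) = -(e.ι.f i x)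
  snd_γ : ∀ i x, snd.f i (γ.f i x) = e'.ι.f i x
  τ_surjective : ∀ i, Surjective (τ.f i)
  range_γ : ∀ i, LinearMap.range (γ.f i) = LinearMap.ker (τ.f i)
  τ_eq_ι : ∀ (i : ℤ) (n : N.X i) (x : P.X i),
    fst.f i x = e.ι.f i n → snd.f i x = 0 → τ.f i x = t.ι.f i n
  p_τ : ∀ i x, t.p.f i (τ.f i x) = e.p.f i (fst.f i x)

lemma IsBaerSum.nonempty_baerSumData {e e' t : DGExt Q N} (h : IsBaerSum e e' t) :
    Nonempty (BaerSumData e e' t) := by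
  obtain ⟨P, p₁, p₂, γ, τ, h₁, h₂, h₃, h₄, h₅, h₆, h₇, h₈, h₉⟩ := h
  exact ⟨⟨P, p₁, p₂, γ, τ, h₁, h₂, h₃, h₄, h₅, h₆, h₇, h₈, h₉⟩⟩

namespace BaerSumData

section

variable {e e' t : DGExt Q N} (B : BaerSumData e e' t)

lemma ext {i : ℤ} {x y : B.P.X i} (h₁ : B.fst.f i x = B.fst.f i y)
    (h₂ : B.snd.f i x = B.snd.f i y) : x = y :=
  B.fst_snd_injective i (Prod.ext h₁ h₂)

lemma τ_γ (i : ℤ) (n : N.X i) : B.τ.f i (B.γ.f i n) = 0 := by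
  rw [← LinearMap.mem_ker, ← B.range_γ]
  exact ⟨n, rfl⟩

end

section StdExt

variable {l₁ l₂ : GHneg Q N} {hc₁ : l₁.isCycle} {hc₂ : l₂.isCycle} {t : DGExt Q N}
  (B : BaerSumData (stdExt N Q l₁ hc₁) (stdExt N Q l₂ hc₂) t)

noncomputable def lift (i : ℤ) :
    (stdExt N Q (l₁ + l₂) (GHneg.isCycle_add hc₁ hc₂)).E.X i →ₗ[R] B.P.X i :=
  ((B.fst.f i).prod (B.snd.f i)).liftOfInjective (B.fst_snd_injective i)
    (LinearMap.id.prod (LinearMap.inr R _ _ ∘ₗ LinearMap.snd R (N.X i) (Q.X i))) fun u => by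
      obtain ⟨x, hx₁, hx₂⟩ := B.exists_fst_snd i u ((0 : N.X i), u.2) rfl
      exact ⟨x, Prod.ext hx₁ hx₂⟩

lemma fst_snd_lift (i : ℤ) (u : (stdExt N Q (l₁ + l₂) (GHneg.isCycle_add hc₁ hc₂)).E.X i) :
    (B.fst.f i (B.lift i u), B.snd.f i (B.lift i u)) = (u, ((0 : N.X i), u.2)) := by
  change (B.fst.f i).prod (B.snd.f i) (B.lift i u) = _
  exact LinearMap.apply_liftOfInjective _ _ _ _ u

lemma fst_lift (i : ℤ) (u : (stdExt N Q (l₁ + l₂) (GHneg.isCycle_add hc₁ hc₂)).E.X i) :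
    B.fst.f i (B.lift i u) = u :=
  congrArg Prod.fst (B.fst_snd_lift i u)

lemma snd_lift (i : ℤ) (u : (stdExt N Q (l₁ + l₂) (GHneg.isCycle_add hc₁ hc₂)).E.X i) :
    B.snd.f i (B.lift i u) = ((0 : N.X i), u.2) :=
  congrArg Prod.snd (B.fst_snd_lift i u)

lemma lift_d (i : ℤ) (u : (stdExt N Q (l₁ + l₂) (GHneg.isCycle_add hc₁ hc₂)).E.X i) :
    B.lift (i - 1) ((stdExt N Q (l₁ + l₂) (GHneg.isCycle_add hc₁ hc₂)).E.d i u) =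
      B.P.d i (B.lift i u) + B.γ.f (i - 1) (-l₂.f i u.2) := by
  refine B.ext ?_ ?_
  · rw [map_add, B.fst_lift, B.fst.comm_d, B.fst_lift, B.fst_γ, map_neg, neg_neg]
    exact Prod.ext (add_assoc _ _ _).symm (add_zero _).symm
  · rw [map_add, B.snd_lift, B.snd.comm_d, B.snd_lift, B.snd_γ]
    refine Prod.ext ?_ (add_zero _).symm
    show (0 : N.X (i - 1)) = N.d i 0 + l₂.f i u.2 + -l₂.f i u.2
    rw [map_zero, zero_add, add_neg_cancel]

lemma lift_smul {i j : ℤ} (a : A.X i)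
    (u : (stdExt N Q (l₁ + l₂) (GHneg.isCycle_add hc₁ hc₂)).E.X j) :
    B.lift (i + j) ((stdExt N Q (l₁ + l₂) (GHneg.isCycle_add hc₁ hc₂)).E.smul a u) =
      B.P.smul a (B.lift j u) := by
  refine B.ext ?_ ?_
  · rw [B.fst_lift, B.fst.comm_smul, B.fst_lift]
    rfl
  · rw [B.snd_lift, B.snd.comm_smul, B.snd_lift]
    exact Prod.ext (N.smul_zero' a).symm rfl

noncomputable def stdAddHom :
    DGHom (stdExt N Q (l₁ + l₂) (GHneg.isCycle_add hc₁ hc₂)).E t.E where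
  f i := B.τ.f i ∘ₗ B.lift i
  comm_d i u := by
    rw [LinearMap.comp_apply, lift_d, map_add, τ_γ, add_zero, B.τ.comm_d]
    rfl
  comm_smul a u := by
    rw [LinearMap.comp_apply, lift_smul, B.τ.comm_smul]
    rfl

lemma stdAddHom_injective (i : ℤ) : Injective (B.stdAddHom.f i) := by
  intro x y hxy
  change B.τ.f i (B.lift i x) = B.τ.f i (B.lift i y) at hxy
  obtain ⟨m, hm⟩ : B.lift i (x - y) ∈ LinearMap.range (B.γ.f i) := by
    rw [B.range_γ, LinearMap.mem_ker, map_sub, map_sub, hxy, sub_self]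
  obtain ⟨hm₁, -⟩ := Prod.ext_iff.mp ((B.snd_γ i m).symm.trans (hm ▸ B.snd_lift i (x - y)))
  change m = 0 at hm₁
  have h₁ := (B.fst_lift i (x - y)).symm.trans (by rw [← hm, B.fst_γ, hm₁, map_zero, neg_zero])
  exact sub_eq_zero.mp h₁

lemma stdAddHom_surjective (i : ℤ) : Surjective (B.stdAddHom.f i) := by
  intro z
  obtain ⟨w, rfl⟩ := B.τ_surjective i z
  set u₁ : N.X i × Q.X i := B.fst.f i w
  set u₂ : N.X i × Q.X i := B.snd.f i w
  have hq : u₁.2 = u₂.2 := B.p_fst i w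
  let u : (stdExt N Q (l₁ + l₂) (GHneg.isCycle_add hc₁ hc₂)).E.X i := (u₁.1 + u₂.1, u₁.2)
  have hw : w = B.lift i u + B.γ.f i u₂.1 := by
    refine B.ext ?_ ?_
    · rw [map_add, B.fst_lift, B.fst_γ]
      refine Prod.ext (add_neg_cancel_right _ _).symm ?_
      show u₁.2 = u₁.2 + -0
      rw [neg_zero, add_zero]
    · rw [map_add, B.snd_lift, B.snd_γ]
      exact Prod.ext (zero_add _).symm ((add_zero _).trans hq).symm
  refine ⟨u, ?_⟩
  change B.τ.f i (B.lift i u) = B.τ.f i w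
  rw [hw, map_add, τ_γ, add_zero]

end StdExt

end BaerSumData

lemma IsBaerSum.stdExt_add_equiv' {e₁ e₂ t : DGExt Q N} {l₁ l₂ : GHneg Q N}
    {hc₁ : l₁.isCycle} {hc₂ : l₂.isCycle} (h : IsBaerSum e₁ e₂ t)
    (h₁ : e₁.Equiv' (stdExt N Q l₁ hc₁)) (h₂ : e₂.Equiv' (stdExt N Q l₂ hc₂)) :
    (stdExt N Q (l₁ + l₂) (GHneg.isCycle_add hc₁ hc₂)).Equiv' t := by
  obtain ⟨B⟩ := (h.of_equiv' h₁ h₂).nonempty_baerSumData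
  refine ⟨B.stdAddHom, fun i => ⟨B.stdAddHom_injective i, B.stdAddHom_surjective i⟩,
    fun i n => B.τ_eq_ι i n _ (B.fst_lift i _) (B.snd_lift i _), fun i u => ?_⟩
  change t.p.f i (B.τ.f i (B.lift i u)) = u.2
  rw [B.p_τ, B.fst_lift]
  rfl

noncomputable def DGExt.cycleOf (hQ : GradedProjective Q) (e : DGExt Q N) : Cyc N Q :=
  have hs := Classical.choose_spec (hQ.exists_section e)
  ⟨e.connecting hs, e.connecting_isCycle hs⟩

end

noncomputable def psi (hQ : GradedProjective Q) : YExt1 N Q ≃ Hneg1 N Q :=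
  Quot.equivOfSection DGExt.equivalence_equiv' (DGExt.cycleOf hQ)
    (fun c => stdExt N Q c.1 c.2) (fun e => e.stdExt_connecting_equiv' _)
    (fun _ _ => stdExt_equiv'_iff)

lemma psi_mk_stdExt (hQ : GradedProjective Q) (c : Cyc N Q) :
    psi N Q hQ (Quot.mk _ (stdExt N Q c.1 c.2)) = Quot.mk _ c :=
  Quot.equivOfSection_mk_section _ _ _ _ _ c

lemma equiv'_of_psi_mk_eq (hQ : GradedProjective Q) {e : DGExt Q N} {c : Cyc N Q}
    (h : psi N Q hQ (Quot.mk _ e) = Quot.mk _ c) : e.Equiv' (stdExt N Q c.1 c.2) :=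
  (Quot.mk_eq_mk_iff DGExt.equivalence_equiv').mp ((psi N Q hQ).eq_symm_apply.mpr h)

theorem psi_well_defined_isomorphism (hQ : GradedProjective Q) :
    ∃ e : YExt1 N Q ≃ Hneg1 N Q,
      (∀ (l : GHneg Q N) (hc : l.isCycle),
        e (Quot.mk _ (stdExt N Q l hc)) = Quot.mk _ (⟨l, hc⟩ : Cyc N Q)) ∧
      (∀ e1 e2 t : DGExt Q N, IsBaerSum e1 e2 t →
        ∀ x y : Cyc N Q, e (Quot.mk _ e1) = Quot.mk _ x → e (Quot.mk _ e2) = Quot.mk _ y →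
          e (Quot.mk _ t) = Quot.mk _ (x + y)) := by
  refine ⟨psi N Q hQ, fun l hc => psi_mk_stdExt N Q hQ ⟨l, hc⟩, fun e₁ e₂ t h x y hx hy => ?_⟩
  have ht : (stdExt N Q (x + y).1 (x + y).2).Equiv' t :=
    h.stdExt_add_equiv' (equiv'_of_psi_mk_eq N Q hQ hx) (equiv'_of_psi_mk_eq N Q hQ hy)
  rw [← Quot.sound ht, psi_mk_stdExt]

end Statement6
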